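/- Let $X$ be a sequentially complete separated uniform space with graph $G$, and $T : X \to X$ an orbitally $G$-continuous Banach $G$-contraction. If $x \in X_T$ (i.e., $(x,Tx) \in E(G)$), then there exists a unique fixed point $x^*$ of $T$ such that $T^n y \to x^*$ for all $y \in [x]_{\widetilde{G}}$. In particular, if $X_T \ne \emptyset$ and $G$ is weakly connected, then $T$ is a Picard operator. -/

import Mathlib

/-!
Testing the contraction condition on one-element basic entourages `V(ρ, ρ(x, y) + ε)` shows
that every generating pseudometric `ρ` satisfies `ρ(Tx, Ty) ≤ α ρ(x, y)` on edges of `G`.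
Since `T` preserves edges, the orbit of `x ∈ X_T` then moves geometrically in each `ρ`, so it
is Cauchy; orbital `G`-continuity makes its limit a fixed point. Along a path of `G̃` from `x`
to `y` the triangle inequality gives `ρ(Tⁿx, Tⁿy) → 0`, so the orbit of `y` has the same limit,
and separation makes limits unique.
-/

open Filter Topology Set

/-- A pseudometric on `X`. -/
def IsPseudoMetric {X : Type*} (d : X → X → ℝ) : Prop :=
  (∀ x, d x x = 0) ∧ (∀ x y, d x y = d y x) ∧ (∀ x y z, d x z ≤ d x y + d y z)

/-- The set `V(ρ, r) = {(x,y) : ρ(x,y) < r}`. -/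
def VEnt {X : Type*} (d : X → X → ℝ) (r : ℝ) : Set (X × X) := {p | d p.1 p.2 < r}

/-- The scaled basic entourage `α V = ⋂ i, V(ρ i, α * r i)`. -/
def scaledEnt {X : Type*} {m : ℕ} (ρ : Fin m → X → X → ℝ) (r : Fin m → ℝ) (α : ℝ) :
    Set (X × X) := ⋂ i, VEnt (ρ i) (α * r i)

/-- The uniformity of `X` is generated by the family `F` of pseudometrics:
each `V(F i, r)` is an entourage, and the basic entourages form a base. -/
def GeneratesUniformity {X ι : Type*} [UniformSpace X] (F : ι → X → X → ℝ) : Prop :=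
  (∀ i, IsPseudoMetric (F i)) ∧
  (∀ i (r : ℝ), 0 < r → VEnt (F i) r ∈ uniformity X) ∧
  (∀ U ∈ uniformity X, ∃ (m : ℕ) (f : Fin m → ι) (r : Fin m → ℝ),
    (∀ i, 0 < r i) ∧ scaledEnt (fun i => F (f i)) r 1 ⊆ U)

/-- `T` is a Banach `G`-contraction (with edge set `E`) with contractive constant `α`,
with respect to the family `F` of pseudometrics. -/
def BanachGContraction {X ι : Type*} (F : ι → X → X → ℝ) (E : Set (X × X))
    (T : X → X) (α : ℝ) : Prop :=
  (∀ x y : X, (x, y) ∈ E → (T x, T y) ∈ E) ∧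
  (∀ (m : ℕ) (f : Fin m → ι) (r : Fin m → ℝ), (∀ i, 0 < r i) →
    ∀ x y : X, (x, y) ∈ scaledEnt (fun i => F (f i)) r 1 ∩ E →
      (T x, T y) ∈ scaledEnt (fun i => F (f i)) r α)

/-- The relation of the symmetrized graph `G̃`. -/
def symRel {X : Type*} (E : Set (X × X)) (a b : X) : Prop := (a, b) ∈ E ∨ (b, a) ∈ E

/-- The edge set of the symmetrized graph `G̃`. -/
def symEdges {X : Type*} (E : Set (X × X)) : Set (X × X) :=
  E ∪ {p | (p.2, p.1) ∈ E}

/-- The component `[x]_{G̃}` of `x`: all points joined to `x` by a path in `G̃`. -/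
def component {X : Type*} (E : Set (X × X)) (x : X) : Set X :=
  {y | Relation.ReflTransGen (symRel E) x y}

open scoped Uniformity

lemma mem_component {X : Type*} {E : Set (X × X)} {x y : X} :
    y ∈ component E x ↔ Relation.ReflTransGen (symRel E) x y := Iff.rfl

def OrbitallyGContinuous {X : Type*} [TopologicalSpace X] (E : Set (X × X)) (T : X → X) :
    Prop :=
  ∀ (x y : X) (p : ℕ → ℕ), (∀ n, 0 < p n) →
    (∀ n : ℕ, (T^[p n] x, T^[p (n + 1)] x) ∈ E) →
    Tendsto (fun n : ℕ => T^[p n] x) atTop (𝓝 y) →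
    Tendsto (fun n : ℕ => T^[p n + 1] x) atTop (𝓝 (T y))

lemma mem_scaledEnt {X : Type*} {m : ℕ} {ρ : Fin m → X → X → ℝ} {r : Fin m → ℝ} {α : ℝ}
    {p : X × X} : p ∈ scaledEnt ρ r α ↔ ∀ i, ρ i p.1 p.2 < α * r i := by
  simp [scaledEnt, VEnt]

namespace IsPseudoMetric

variable {X : Type*} {d : X → X → ℝ}

lemma nonneg (hd : IsPseudoMetric d) (x y : X) : 0 ≤ d x y := by
  have h := hd.2.2 x y x
  rw [hd.1, hd.2.1 y x] at h
  linarith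

lemma le_geometric_of_le_geometric_succ (hd : IsPseudoMetric d) {u : ℕ → X} {C α : ℝ}
    (hα0 : 0 ≤ α) (hα1 : α < 1) (hu : ∀ n, d (u n) (u (n + 1)) ≤ C * α ^ n) (n p : ℕ) :
    d (u n) (u (n + p)) ≤ C * α ^ n / (1 - α) := by
  have hC : 0 ≤ C := by simpa using (hd.nonneg _ _).trans (hu 0)
  have h1α : 0 < 1 - α := by linarith
  induction p generalizing n with
  | zero => rw [add_zero, hd.1]; positivity
  | succ p ih =>
    calc d (u n) (u (n + (p + 1)))
        ≤ d (u n) (u (n + 1)) + d (u (n + 1)) (u (n + 1 + p)) := by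
          rw [add_right_comm, add_assoc n p 1, add_comm p 1, ← add_assoc]
          exact hd.2.2 _ _ _
      _ ≤ C * α ^ n + C * α ^ (n + 1) / (1 - α) := add_le_add (hu n) (ih (n + 1))
      _ = C * α ^ n / (1 - α) := by field_simp; ring

end IsPseudoMetric

namespace GeneratesUniformity

variable {X ι : Type*} [UniformSpace X] {F : ι → X → X → ℝ}

lemma tendsto_uniformity (hF : GeneratesUniformity F) {β : Type*} {l : Filter β}
    {g : β → X × X} (hg : ∀ i, Tendsto (fun b => F i (g b).1 (g b).2) l (𝓝 0)) :
    Tendsto g l (𝓤 X) := by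
  intro U hU
  obtain ⟨m, f, r, hr, hsub⟩ := hF.2.2 U hU
  exact mem_map.2 <| (eventually_all.2 fun j => (hg (f j)).eventually (gt_mem_nhds (hr j))).mono
    fun b hb => hsub (mem_scaledEnt.2 fun j => by simpa using hb j)

lemma cauchySeq_of_le_of_tendsto (hF : GeneratesUniformity F) {u : ℕ → X} (b : ι → ℕ → ℝ)
    (hb : ∀ i, Tendsto (b i) atTop (𝓝 0)) (hu : ∀ i n p, F i (u n) (u (n + p)) ≤ b i n) :
    CauchySeq u := by
  have hmin : Tendsto (fun q : ℕ × ℕ => min q.1 q.2) atTop atTop :=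
    tendsto_atTop_atTop.2 fun N => ⟨(N, N), fun q hq => le_min hq.1 hq.2⟩
  refine cauchySeq_iff_tendsto.2 (hF.tendsto_uniformity fun i => ?_)
  refine squeeze_zero (fun q => (hF.1 i).nonneg _ _) (fun q => ?_) ((hb i).comp hmin)
  obtain ⟨m, n⟩ := q
  rcases le_total m n with hmn | hnm
  · obtain ⟨p, rfl⟩ := Nat.exists_eq_add_of_le hmn
    simpa [hmn] using hu i m p
  · obtain ⟨p, rfl⟩ := Nat.exists_eq_add_of_le hnm
    simpa [hnm, (hF.1 i).2.1 (u (n + p))] using hu i n p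

end GeneratesUniformity

namespace BanachGContraction

variable {X ι : Type*} {F : ι → X → X → ℝ} {E : Set (X × X)} {T : X → X} {α : ℝ}

lemma apply_le (hpm : ∀ i, IsPseudoMetric (F i)) (hT : BanachGContraction F E T α) {x y : X}
    (hxy : (x, y) ∈ E) (i : ι) : F i (T x) (T y) ≤ α * F i x y := by
  have hε : ∀ ε > 0, F i (T x) (T y) ≤ α * (F i x y + ε) := fun ε hε => by
    have hr : 0 < F i x y + ε := by linarith [(hpm i).nonneg x y]
    have hmem : (x, y) ∈ scaledEnt (fun _ : Fin 1 => F i) (fun _ => F i x y + ε) 1 :=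
      mem_scaledEnt.2 fun _ => by simpa using hε
    exact (mem_scaledEnt.1 (hT.2 1 (fun _ => i) _ (fun _ => hr) x y ⟨hmem, hxy⟩) 0).le
  have hlim : Tendsto (fun ε => α * (F i x y + ε)) (𝓝[>] 0) (𝓝 (α * F i x y)) := by
    simpa using (((continuous_const.add continuous_id).const_mul α).tendsto 0).mono_left
      nhdsWithin_le_nhds
  exact ge_of_tendsto hlim (eventually_nhdsWithin_of_forall hε)

lemma iterate_mem (hT : BanachGContraction F E T α) {x y : X} (hxy : (x, y) ∈ E) (n : ℕ) :
    (T^[n] x, T^[n] y) ∈ E := by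
  induction n with
  | zero => exact hxy
  | succ n ih => simpa only [Function.iterate_succ_apply'] using hT.1 _ _ ih

lemma apply_iterate_le (hpm : ∀ i, IsPseudoMetric (F i)) (hT : BanachGContraction F E T α)
    (hα0 : 0 ≤ α) {x y : X} (hxy : (x, y) ∈ E) (i : ι) (n : ℕ) :
    F i (T^[n] x) (T^[n] y) ≤ α ^ n * F i x y := by
  induction n with
  | zero => simp
  | succ n ih =>
    rw [Function.iterate_succ_apply', Function.iterate_succ_apply', pow_succ', mul_assoc]
    exact (hT.apply_le hpm (hT.iterate_mem hxy n) i).trans (mul_le_mul_of_nonneg_left ih hα0)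

lemma tendsto_apply_iterate_of_mem (hpm : ∀ i, IsPseudoMetric (F i))
    (hT : BanachGContraction F E T α) (hα0 : 0 ≤ α) (hα1 : α < 1) {x y : X}
    (hxy : (x, y) ∈ E) (i : ι) :
    Tendsto (fun n => F i (T^[n] x) (T^[n] y)) atTop (𝓝 0) := by
  refine squeeze_zero (fun n => (hpm i).nonneg _ _) (hT.apply_iterate_le hpm hα0 hxy i) ?_
  simpa using (tendsto_pow_atTop_nhds_zero_of_lt_one hα0 hα1).mul_const (F i x y)

lemma tendsto_apply_iterate_of_reflTransGen (hpm : ∀ i, IsPseudoMetric (F i))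
    (hT : BanachGContraction F E T α) (hα0 : 0 ≤ α) (hα1 : α < 1) {x y : X}
    (hxy : Relation.ReflTransGen (symRel E) x y) (i : ι) :
    Tendsto (fun n => F i (T^[n] x) (T^[n] y)) atTop (𝓝 0) := by
  induction hxy with
  | refl => simp [(hpm i).1]
  | @tail b c _ hbc ih =>
    have hstep : Tendsto (fun n => F i (T^[n] b) (T^[n] c)) atTop (𝓝 0) := by
      rcases hbc with hbc | hcb
      · exact hT.tendsto_apply_iterate_of_mem hpm hα0 hα1 hbc i
      · simpa only [(hpm i).2.1 (T^[_] b)] using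
          hT.tendsto_apply_iterate_of_mem hpm hα0 hα1 hcb i
    refine squeeze_zero (fun n => (hpm i).nonneg _ _) (fun n => (hpm i).2.2 _ (T^[n] b) _) ?_
    simpa using ih.add hstep

lemma cauchySeq_iterate [UniformSpace X] (hF : GeneratesUniformity F)
    (hT : BanachGContraction F E T α) (hα0 : 0 ≤ α) (hα1 : α < 1) {x : X}
    (hx : (x, T x) ∈ E) : CauchySeq fun n => T^[n] x := by
  refine hF.cauchySeq_of_le_of_tendsto (fun i n => F i x (T x) * α ^ n / (1 - α))
    (fun i => ?_) fun i => (hF.1 i).le_geometric_of_le_geometric_succ hα0 hα1 fun n => ?_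
  · simpa using ((tendsto_pow_atTop_nhds_zero_of_lt_one hα0 hα1).const_mul
      (F i x (T x))).div_const (1 - α)
  · rw [Function.iterate_succ_apply, mul_comm]
    exact hT.apply_iterate_le hF.1 hα0 hx i n

lemma isFixedPt_of_tendsto_iterate [TopologicalSpace X] [T2Space X]
    (hT : BanachGContraction F E T α) (hOGC : OrbitallyGContinuous E T) {x z : X}
    (hx : (x, T x) ∈ E) (hz : Tendsto (fun n => T^[n] x) atTop (𝓝 z)) :
    Function.IsFixedPt T z := by
  have hedge : ∀ n, (T^[n + 1] x, T^[n + 1 + 1] x) ∈ E := fun n => by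
    rw [Function.iterate_succ_apply T (n + 1)]
    exact hT.iterate_mem hx (n + 1)
  exact tendsto_nhds_unique (hOGC x z (· + 1) (fun n => n.succ_pos) hedge
    (hz.comp (tendsto_add_atTop_nat 1))) (hz.comp (tendsto_add_atTop_nat 2))

end BanachGContraction

theorem stmt17_general {X ι : Type*} [UniformSpace X] (F : ι → X → X → ℝ)
    (hgen : GeneratesUniformity F)
    (hsep : ∀ x y : X, (∀ U ∈ uniformity X, (x, y) ∈ U) → x = y)
    (hcomp : ∀ u : ℕ → X, CauchySeq u → ∃ z : X, Tendsto u atTop (nhds z))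
    (E : Set (X × X))
    (T : X → X) (α : ℝ) (hα0 : 0 < α) (hα1 : α < 1)
    (hT : BanachGContraction F E T α)
    (hOGC : ∀ (x y : X) (p : ℕ → ℕ), (∀ n, 0 < p n) →
      (∀ n : ℕ, (T^[p n] x, T^[p (n + 1)] x) ∈ E) →
      Tendsto (fun n : ℕ => T^[p n] x) atTop (nhds y) →
      Tendsto (fun n : ℕ => T^[p n + 1] x) atTop (nhds (T y))) :
    (∀ x : X, (x, T x) ∈ E →
      ∃! xs : X, T xs = xs ∧
        ∀ y ∈ component E x, Tendsto (fun n : ℕ => T^[n] y) atTop (nhds xs)) ∧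
    (((∃ x : X, (x, T x) ∈ E) ∧ (∀ a b : X, Relation.ReflTransGen (symRel E) a b)) →
      ∃ xs : X, T xs = xs ∧ (∀ y : X, T y = y → y = xs) ∧
        ∀ x : X, Tendsto (fun n : ℕ => T^[n] x) atTop (nhds xs)) := by
  have : T0Space X := t0Space_iff_uniformity.2 hsep
  have hlocal : ∀ x, (x, T x) ∈ E → ∃! xs : X, T xs = xs ∧
      ∀ y ∈ component E x, Tendsto (fun n => T^[n] y) atTop (𝓝 xs) := by
    intro x hx
    obtain ⟨z, hz⟩ := hcomp _ (hT.cauchySeq_iterate hgen hα0.le hα1 hx)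
    have hconv : ∀ y ∈ component E x, Tendsto (fun n => T^[n] y) atTop (𝓝 z) := fun y hy =>
      hz.congr_uniformity <| hgen.tendsto_uniformity
        (hT.tendsto_apply_iterate_of_reflTransGen hgen.1 hα0.le hα1 (mem_component.1 hy))
    exact ⟨z, ⟨hT.isFixedPt_of_tendsto_iterate hOGC hx hz, hconv⟩,
      fun w hw => tendsto_nhds_unique (hw.2 x .refl) hz⟩
  refine ⟨hlocal, fun ⟨⟨x, hx⟩, hconn⟩ => ?_⟩
  obtain ⟨z, ⟨hfix, hconv⟩, -⟩ := hlocal x hx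
  refine ⟨z, hfix, fun y hy => tendsto_nhds_unique ?_ (hconv y (mem_component.2 (hconn x y))),
    fun y => hconv y (mem_component.2 (hconn x y))⟩
  simp only [Function.iterate_fixed hy, tendsto_const_nhds]

theorem stmt17 {X ι : Type*} [UniformSpace X] (F : ι → X → X → ℝ)
    (hgen : GeneratesUniformity F)
    (hsep : ∀ x y : X, (∀ U ∈ uniformity X, (x, y) ∈ U) → x = y)
    (hcomp : ∀ u : ℕ → X, CauchySeq u → ∃ z : X, Tendsto u atTop (nhds z))
    (E : Set (X × X)) (hloop : ∀ x : X, (x, x) ∈ E)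
    (T : X → X) (α : ℝ) (hα0 : 0 < α) (hα1 : α < 1)
    (hT : BanachGContraction F E T α)
    (hOGC : ∀ (x y : X) (p : ℕ → ℕ), (∀ n, 0 < p n) →
      (∀ n : ℕ, (T^[p n] x, T^[p (n + 1)] x) ∈ E) →
      Tendsto (fun n : ℕ => T^[p n] x) atTop (nhds y) →
      Tendsto (fun n : ℕ => T^[p n + 1] x) atTop (nhds (T y))) :
    (∀ x : X, (x, T x) ∈ E →
      ∃! xs : X, T xs = xs ∧
        ∀ y ∈ component E x, Tendsto (fun n : ℕ => T^[n] y) atTop (nhds xs)) ∧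
    (((∃ x : X, (x, T x) ∈ E) ∧ (∀ a b : X, Relation.ReflTransGen (symRel E) a b)) →
      ∃ xs : X, T xs = xs ∧ (∀ y : X, T y = y → y = xs) ∧
        ∀ x : X, Tendsto (fun n : ℕ => T^[n] x) atTop (nhds xs)) :=
  stmt17_general F hgen hsep hcomp E T α hα0 hα1 hT hOGC
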